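/- arXiv:1210.6326 — 2 statements merged into one kernel-verified Lean document; each statement's English description precedes it below -/
import Mathlib

section
/- Let $V = V_1 + V_2$ with $V_1 \in L^\infty(\mathbb{R}^3)$ compactly supported and $\|V_2\|_{\mathcal{K}} \leq \epsilon$ (global Kato norm). Then for all $\lambda, \lambda_0 \geq 0$ with $|\sqrt{\lambda} - \sqrt{\lambda_0}| \leq \epsilon \|V_1\|_{L^1}^{-1}$, the kernel of $B_{\lambda,\lambda_0} = V(R_0^+(\lambda) - R_0^+(\lambda_0))$ satisfies the pointwise bound $|B_{\lambda,\lambda_0}(x,y)| \leq \frac{\epsilon |V_1(x)|}{4\pi \|V_1\|_{L^1}} + \frac{|V_2(x)|}{2\pi |x-y|}$, and the right-hand side $B(x,y)$ satisfies $\sup_y \int |B(x,y)|\, dx \leq \epsilon$ (up to a constant). -/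
/-!
Write `r = ‖x - y‖`, so that the kernel is `V(x) (e^{i√λ r} - e^{i√λ₀ r}) / (4π r)`. On the `V₁`
part the difference of exponentials is at most `|√λ - √λ₀| r`, which cancels the singularity
and leaves `ε |V₁(x)| / (4π ‖V₁‖₁)`, a function of `x` with integral `ε / (4π)`. On the `V₂`
part the difference is at most `2`, and the Kato bound on `V₂` controls the column integrals
of `|V₂(x)| / (2π ‖x - y‖)` by `ε / (2π)`.
-/

open MeasureTheory Complex
open scoped ENNReal

lemma Complex.norm_exp_I_mul_ofReal_sub_exp_I_mul_ofReal_le (a b : ℝ) :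
    ‖exp (I * a) - exp (I * b)‖ ≤ |a - b| := by
  have hfactor :
      exp (I * a) - exp (I * b) = exp (I * b) * (exp (I * (a - b : ℝ)) - 1) := by
    rw [mul_sub, ← exp_add, ofReal_sub]
    ring_nf
  rw [hfactor, norm_mul, norm_exp_I_mul_ofReal, one_mul, ← Real.norm_eq_abs]
  exact Real.norm_exp_I_mul_ofReal_sub_one_le

lemma Complex.norm_exp_I_mul_ofReal_sub_exp_I_mul_ofReal_le_two (a b : ℝ) :
    ‖exp (I * a) - exp (I * b)‖ ≤ 2 := by
  calc ‖exp (I * a) - exp (I * b)‖ ≤ ‖exp (I * a)‖ + ‖exp (I * b)‖ := norm_sub_le _ _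
    _ = 2 := by rw [norm_exp_I_mul_ofReal, norm_exp_I_mul_ofReal]; norm_num

lemma norm_mul_exp_sub_exp_div_le {v₁ v₂ a b r ε N : ℝ} (hr : 0 < r) (hab : |a - b| ≤ ε / N) :
    ‖((v₁ + v₂ : ℝ) : ℂ) * (exp (I * (a * r : ℝ)) - exp (I * (b * r : ℝ))) /
        ((4 * Real.pi * r : ℝ) : ℂ)‖
      ≤ ε * |v₁| / (4 * Real.pi * N) + |v₂| / (2 * Real.pi * r) := by
  set E := exp (I * (a * r : ℝ)) - exp (I * (b * r : ℝ))
  have hE_lip : ‖E‖ ≤ ε / N * r := by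
    calc ‖E‖ ≤ |a * r - b * r| := norm_exp_I_mul_ofReal_sub_exp_I_mul_ofReal_le _ _
      _ = |a - b| * r := by rw [← sub_mul, abs_mul, abs_of_pos hr]
      _ ≤ ε / N * r := by gcongr
  have hE_two : ‖E‖ ≤ 2 := norm_exp_I_mul_ofReal_sub_exp_I_mul_ofReal_le_two _ _
  have hden : 0 < 4 * Real.pi * r := by positivity
  calc ‖((v₁ + v₂ : ℝ) : ℂ) * E / ((4 * Real.pi * r : ℝ) : ℂ)‖
      = |v₁ + v₂| * ‖E‖ / (4 * Real.pi * r) := by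
        rw [norm_div, norm_mul, norm_real, norm_real, Real.norm_eq_abs, Real.norm_eq_abs,
          abs_of_pos hden]
    _ ≤ (|v₁| * ‖E‖ + |v₂| * ‖E‖) / (4 * Real.pi * r) := by
        rw [← add_mul]; gcongr; exact abs_add_le _ _
    _ ≤ (|v₁| * (ε / N * r) + |v₂| * 2) / (4 * Real.pi * r) := by gcongr
    _ = ε * |v₁| / (4 * Real.pi * N) + |v₂| / (2 * Real.pi * r) := by
        field_simp
        ring

lemma lintegral_ofReal_mul_abs {α : Type*} [MeasurableSpace α] {μ : Measure α} {f : α → ℝ}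
    (hf : Integrable f μ) (k : ℝ) :
    ∫⁻ x, ENNReal.ofReal (k * |f x|) ∂μ = ENNReal.ofReal (k * ∫ x, |f x| ∂μ) := by
  simp_rw [ENNReal.ofReal_mul' (abs_nonneg _)]
  rw [lintegral_const_mul' _ _ ENNReal.ofReal_ne_top,
    ENNReal.ofReal_mul' (integral_nonneg fun _ ↦ abs_nonneg _),
    ofReal_integral_eq_lintegral_ofReal hf.abs (.of_forall fun _ ↦ abs_nonneg _)]

lemma ENNReal.ofReal_abs_div_mul_le (v c : ℝ) {r : ℝ} (hr : 0 ≤ r) :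
    ENNReal.ofReal (|v| / (c * r))
      ≤ ENNReal.ofReal c⁻¹ * ((‖v‖₊ : ℝ≥0∞) / ENNReal.ofReal r) := by
  rcases hr.eq_or_lt with rfl | hr
  · simp
  · rw [div_mul_eq_div_div_swap, div_eq_inv_mul _ c, ENNReal.ofReal_mul' (by positivity),
      ENNReal.ofReal_div_of_pos hr, ← enorm_eq_nnnorm, Real.enorm_eq_ofReal_abs]

lemma lintegral_ofReal_abs_div_mul_norm_sub_le {E : Type*} [NormedAddCommGroup E]
    [MeasurableSpace E] (μ : Measure E) (g : E → ℝ) (c : ℝ) (y : E) :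
    ∫⁻ x, ENNReal.ofReal (|g x| / (c * ‖x - y‖)) ∂μ
      ≤ ENNReal.ofReal c⁻¹ * ∫⁻ x, (‖g x‖₊ : ℝ≥0∞) / ENNReal.ofReal ‖y - x‖ ∂μ := by
  rw [← lintegral_const_mul' _ _ ENNReal.ofReal_ne_top]
  refine lintegral_mono fun x ↦ ?_
  rw [norm_sub_rev y x]
  exact ENNReal.ofReal_abs_div_mul_le _ _ (norm_nonneg _)

theorem resolvent_difference_kernel_bound_general (V₁ V₂ : EuclideanSpace ℝ (Fin 3) → ℝ)
    (hV₁i : Integrable V₁) (hV₁pos : 0 < ∫ x, |V₁ x|)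
    (ε : ℝ) (hε : 0 < ε)
    (hV₂K : ∀ x : EuclideanSpace ℝ (Fin 3),
      ∫⁻ y, (‖V₂ y‖₊ : ℝ≥0∞) / ENNReal.ofReal ‖x - y‖ ≤ ENNReal.ofReal ε)
    (lam lam₀ : ℝ)
    (hclose : |Real.sqrt lam - Real.sqrt lam₀| ≤ ε / ∫ x, |V₁ x|) :
    (∀ x y : EuclideanSpace ℝ (Fin 3), x ≠ y →
      ‖((V₁ x + V₂ x : ℝ) : ℂ) *
          (Complex.exp (Complex.I * (Real.sqrt lam * ‖x - y‖ : ℝ)) -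
            Complex.exp (Complex.I * (Real.sqrt lam₀ * ‖x - y‖ : ℝ))) /
          ((4 * Real.pi * ‖x - y‖ : ℝ) : ℂ)‖
        ≤ ε * |V₁ x| / (4 * Real.pi * ∫ z, |V₁ z|) +
            |V₂ x| / (2 * Real.pi * ‖x - y‖)) ∧
    ∃ C : ℝ, 0 < C ∧ ∀ y : EuclideanSpace ℝ (Fin 3),
      ∫⁻ x, ENNReal.ofReal (ε * |V₁ x| / (4 * Real.pi * ∫ z, |V₁ z|) +
          |V₂ x| / (2 * Real.pi * ‖x - y‖))
        ≤ ENNReal.ofReal (C * ε) := by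
  refine ⟨fun x y hxy ↦ norm_mul_exp_sub_exp_div_le (norm_sub_pos_iff.2 hxy) hclose,
    3 / (4 * Real.pi), by positivity, fun y ↦ ?_⟩
  have hV₁_column : ∫⁻ x, ENNReal.ofReal (ε * |V₁ x| / (4 * Real.pi * ∫ z, |V₁ z|))
      = ENNReal.ofReal (ε / (4 * Real.pi)) := by
    simp_rw [mul_div_right_comm ε]
    rw [lintegral_ofReal_mul_abs hV₁i]
    field_simp
  calc _ = ∫⁻ x, (ENNReal.ofReal (ε * |V₁ x| / (4 * Real.pi * ∫ z, |V₁ z|))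
          + ENNReal.ofReal (|V₂ x| / (2 * Real.pi * ‖x - y‖))) :=
        lintegral_congr fun x ↦ ENNReal.ofReal_add (by positivity) (by positivity)
    _ = ENNReal.ofReal (ε / (4 * Real.pi))
          + ∫⁻ x, ENNReal.ofReal (|V₂ x| / (2 * Real.pi * ‖x - y‖)) := by
        rw [lintegral_add_left' (by fun_prop), hV₁_column]
    _ ≤ ENNReal.ofReal (ε / (4 * Real.pi))
          + ENNReal.ofReal (2 * Real.pi)⁻¹ * ENNReal.ofReal ε := by
        gcongr
        exact (lintegral_ofReal_abs_div_mul_norm_sub_le _ _ _ y).trans (by gcongr; exact hV₂K y)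
    _ = ENNReal.ofReal (3 / (4 * Real.pi) * ε) := by
        rw [← ENNReal.ofReal_mul (by positivity),
          ← ENNReal.ofReal_add (by positivity) (by positivity)]
        congr 1
        field_simp
        ring

/-- Kernel bound for `B_{λ,λ₀} = V(R₀⁺(λ) - R₀⁺(λ₀))` with `V = V₁ + V₂`,
`V₁ ∈ L^∞` compactly supported and `‖V₂‖_𝒦 ≤ ε`: for `|√λ - √λ₀| ≤ ε ‖V₁‖_{L¹}⁻¹` the
kernel is pointwise bounded by `ε|V₁(x)|/(4π‖V₁‖₁) + |V₂(x)|/(2π|x-y|)`, whose columns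
have `L¹_x` norm at most a constant times `ε`. -/
theorem resolvent_difference_kernel_bound (V₁ V₂ : EuclideanSpace ℝ (Fin 3) → ℝ)
    (hV₁m : Measurable V₁) (hV₁i : Integrable V₁) (hV₁pos : 0 < ∫ x, |V₁ x|)
    (hV₁b : ∃ M, ∀ x, |V₁ x| ≤ M) (hV₁s : HasCompactSupport V₁)
    (ε : ℝ) (hε : 0 < ε)
    (hV₂K : ∀ x : EuclideanSpace ℝ (Fin 3),
      ∫⁻ y, (‖V₂ y‖₊ : ℝ≥0∞) / ENNReal.ofReal ‖x - y‖ ≤ ENNReal.ofReal ε)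
    (lam lam₀ : ℝ) (hlam : 0 ≤ lam) (hlam₀ : 0 ≤ lam₀)
    (hclose : |Real.sqrt lam - Real.sqrt lam₀| ≤ ε / ∫ x, |V₁ x|) :
    (∀ x y : EuclideanSpace ℝ (Fin 3), x ≠ y →
      ‖((V₁ x + V₂ x : ℝ) : ℂ) *
          (Complex.exp (Complex.I * (Real.sqrt lam * ‖x - y‖ : ℝ)) -
            Complex.exp (Complex.I * (Real.sqrt lam₀ * ‖x - y‖ : ℝ))) /
          ((4 * Real.pi * ‖x - y‖ : ℝ) : ℂ)‖
        ≤ ε * |V₁ x| / (4 * Real.pi * ∫ z, |V₁ z|) +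
            |V₂ x| / (2 * Real.pi * ‖x - y‖)) ∧
    ∃ C : ℝ, 0 < C ∧ ∀ y : EuclideanSpace ℝ (Fin 3),
      ∫⁻ x, ENNReal.ofReal (ε * |V₁ x| / (4 * Real.pi * ∫ z, |V₁ z|) +
          |V₂ x| / (2 * Real.pi * ‖x - y‖))
        ≤ ENNReal.ofReal (C * ε) :=
  resolvent_difference_kernel_bound_general V₁ V₂ hV₁i hV₁pos ε hε hV₂K lam lam₀ hclose
end

section
/- Suppose $\lambda_j < 0$, $\psi_j \in L^2(\mathbb{R}^3)$ solves $\psi_j = -(-\Delta - \lambda_j)^{-1}(V\psi_j)$, where $V = V_1 + V_2$ with $V_1$ bounded and compactly supported, $\|V_2\|_{\mathcal{K}} \leq 1$, and $e^{\epsilon|\cdot|}V_2 \in L^{6,2}$ for some small $\epsilon \in (0, \sqrt{-\lambda_j})$. If the operator $e^{\epsilon|\cdot|} R_0(\lambda_j) V_2 e^{-\epsilon|\cdot|}$ has $L^\infty \to L^\infty$ norm strictly less than $1$, then $e^{\epsilon|x|}\psi_j \in L^\infty$, i.e., $\psi_j$ decays exponentially; in particular $\psi_j \in L^p$ for all $1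 \leq p \leq \infty$. -/
/-
For `ε ≤ √(-λ)` the resolvent kernel satisfies `e^{-√(-λ)|x-y|} ≤ e^{-ε|x|} e^{ε|y|}`. Hence, with
`W = e^{ε|·|} |V₁ + V₂|`, the eigenvalue equation and AM-GM give
  `|ψ(x)| ≤ e^{-ε|x|} ∫ W(y) |ψ(y)| / (4π|x-y|) dy`
  `       ≤ e^{-ε|x|} / (8π) (∫ W(y)² / |x-y|² dy + ‖ψ‖₂²)`.
The last integral is bounded uniformly in `x`: in dimension three `∫_E |x-y|⁻² dy ≲ |E|^{1/3}`,
which settles the bounded, compactly supported part, and summed over the dyadic level sets of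
`e^{ε|·|} |V₂|` the same bound gives `∫₀^∞ t |{e^{ε|·|} |V₂| ≥ t}|^{1/3} dt`, the squared
`L^{6,2}` quasinorm. The pointwise bound `|ψ(x)| ≲ e^{-ε|x|}` then puts `ψ` in every `L^p`.
-/

noncomputable section
open MeasureTheory Complex
open scoped ENNReal NNReal

/-- The Lorentz `L^{p,q}` quasinorm (finite exponents). -/
def lorentzNorm {X : Type*} [MeasurableSpace X] (p q : ℝ) (μ : Measure X)
    (f : X → ℂ) : ℝ≥0∞ :=
  ENNReal.ofReal p ^ (1 / q) *
    (∫⁻ t in Set.Ioi (0 : ℝ),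
        (ENNReal.ofReal t * μ {x | ENNReal.ofReal t ≤ (‖f x‖₊ : ℝ≥0∞)} ^ (1 / p)) ^ q /
          ENNReal.ofReal t) ^ (1 / q)

/-- The kernel of the free resolvent `R₀(λⱼ)` for `λⱼ < 0`. -/
def negKernel (lamj : ℝ) (x y : EuclideanSpace ℝ (Fin 3)) : ℝ :=
  Real.exp (-(Real.sqrt (-lamj)) * ‖x - y‖) / (4 * Real.pi * ‖x - y‖)

open Set Metric Module
open scoped Real

section Distribution

variable {α : Type*} [MeasurableSpace α] (μ : Measure α)

lemma tsum_zpow_sq_mul_distribution_le (F : α → ℝ) {a : ℝ} (ha : 0 ≤ a) :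
    ∑' n : ℤ, ENNReal.ofReal (((2 : ℝ) ^ n) ^ 2) * μ {y | (2 : ℝ) ^ (n + 1) ≤ F y} ^ a
      ≤ ∫⁻ t in Ioi 0, ENNReal.ofReal t * μ {y | t ≤ F y} ^ a := by
  set g : ℝ → ℝ≥0∞ := fun t => ENNReal.ofReal t * μ {y | t ≤ F y} ^ a
  have hg : Measurable g := by
    have : Antitone fun t : ℝ => μ {y | t ≤ F y} := fun s t hst =>
      measure_mono fun y hy => hst.trans hy
    exact ENNReal.measurable_ofReal.mul (this.measurable.pow_const a)
  set I : ℤ → Set ℝ := fun n => Ico ((2 : ℝ) ^ n) (2 ^ (n + 1))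
  have hdisj : Pairwise (Function.onFun Disjoint I) := by
    simpa [Order.succ_eq_add_one] using
      (zpow_right_mono₀ (by norm_num : (1 : ℝ) ≤ 2)).pairwise_disjoint_on_Ico_succ
  have hterm : ∀ n : ℤ,
      ENNReal.ofReal (((2 : ℝ) ^ n) ^ 2) * μ {y | (2 : ℝ) ^ (n + 1) ≤ F y} ^ a
        ≤ ∫⁻ t in I n, g t := by
    intro n
    have hlen : volume (I n) = ENNReal.ofReal ((2 : ℝ) ^ n) := by
      rw [Real.volume_Ico, zpow_add_one₀ two_ne_zero]
      ring_nf
    calc ENNReal.ofReal (((2 : ℝ) ^ n) ^ 2) * μ {y | (2 : ℝ) ^ (n + 1) ≤ F y} ^ a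
        = ∫⁻ _ in I n,
            ENNReal.ofReal ((2 : ℝ) ^ n) * μ {y | (2 : ℝ) ^ (n + 1) ≤ F y} ^ a := by
          rw [setLIntegral_const, hlen, sq, ENNReal.ofReal_mul (by positivity)]
          ring
      _ ≤ ∫⁻ t in I n, g t := by
          refine setLIntegral_mono hg fun t ht => ?_
          exact mul_le_mul' (ENNReal.ofReal_le_ofReal ht.1)
            (ENNReal.rpow_le_rpow (measure_mono fun y hy => ht.2.le.trans hy) ha)
  calc _ ≤ ∑' n : ℤ, ∫⁻ t in I n, g t := ENNReal.tsum_le_tsum hterm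
    _ = ∫⁻ t in ⋃ n, I n, g t := (lintegral_iUnion (fun _ => measurableSet_Ico) hdisj g).symm
    _ ≤ ∫⁻ t in Ioi 0, g t :=
        lintegral_mono_set <| iUnion_subset fun n t ht => (zpow_pos two_pos n).trans_le ht.1

lemma lorentzNorm_two_eq {p : ℝ} (f : α → ℂ) :
    lorentzNorm p 2 μ f = ENNReal.ofReal p ^ (1 / 2 : ℝ)
      * (∫⁻ t in Ioi 0, ENNReal.ofReal t * μ {x | t ≤ ‖f x‖} ^ (2 / p)) ^ (1 / 2 : ℝ) := by
  unfold lorentzNorm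
  congr 2
  refine setLIntegral_congr_fun measurableSet_Ioi fun t (ht : 0 < t) => ?_
  have hlevel : {x | ENNReal.ofReal t ≤ (‖f x‖₊ : ℝ≥0∞)} = {x | t ≤ ‖f x‖} := by
    ext x
    show ENNReal.ofReal t ≤ ‖f x‖ₑ ↔ t ≤ ‖f x‖
    rw [← ofReal_norm]
    exact ENNReal.ofReal_le_ofReal_iff (norm_nonneg _)
  rw [hlevel, ENNReal.mul_rpow_of_nonneg _ _ zero_le_two, ← ENNReal.rpow_mul, ENNReal.rpow_two,
    sq, mul_right_comm, mul_div_assoc, ENNReal.div_self (by simpa using ht) ENNReal.ofReal_ne_top,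
    mul_one, one_div_mul_eq_div]

end Distribution

lemma ofReal_sq_le_tsum_indicator {α : Type*} {F : α → ℝ} (hF : ∀ y, 0 ≤ F y)
    (S : ℤ → Set α) (hS : ∀ n, {y | (2 : ℝ) ^ (n + 1) ≤ F y} ⊆ S n) (y : α) :
    ENNReal.ofReal (F y ^ 2)
      ≤ ∑' n : ℤ, (S n).indicator (fun _ => ENNReal.ofReal (16 * ((2 : ℝ) ^ n) ^ 2)) y := by
  rcases (hF y).eq_or_lt with h0 | hpos
  · simp [← h0]
  obtain ⟨m, hm_le, hm_lt⟩ := exists_mem_Ico_zpow hpos one_lt_two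
  have hy : y ∈ S (m - 1) := hS _ (by simpa using hm_le)
  refine le_trans ?_ (ENNReal.le_tsum (m - 1))
  rw [indicator_of_mem hy]
  refine ENNReal.ofReal_le_ofReal ?_
  have : (2 : ℝ) ^ (m + 1) = 4 * 2 ^ (m - 1) := by
    rw [show m + 1 = m - 1 + 2 by ring, zpow_add₀ two_ne_zero]
    norm_num
    ring
  nlinarith [hm_lt, zpow_pos (two_pos (α := ℝ)) (m - 1)]

lemma HasCompactSupport.exists_abs_mul_le_indicator {E : Type*} [NormedAddCommGroup E]
    [ProperSpace E] {f w : E → ℝ} (hf : HasCompactSupport f)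
    (hfb : ∃ M, ∀ x, |f x| ≤ M) (hw : Continuous w) :
    ∃ K R, ∀ y, |w y * f y| ≤ (closedBall 0 R).indicator (fun _ => K) y := by
  obtain ⟨M, hM⟩ := hfb
  obtain ⟨R, hR⟩ := hf.isBounded.subset_closedBall 0
  obtain ⟨C, hC⟩ :=
    (isCompact_closedBall (0 : E) R).exists_bound_of_continuousOn hw.continuousOn
  refine ⟨C * M, R, fun y => ?_⟩
  by_cases hy : y ∈ closedBall 0 R
  · rw [indicator_of_mem hy, abs_mul]
    exact mul_le_mul (hC y hy) (hM y) (abs_nonneg _) ((abs_nonneg _).trans (hC y hy))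
  · rw [indicator_of_notMem hy, image_eq_zero_of_notMem_tsupport fun h => hy (hR h)]
    simp

section FiniteDimensional

variable {E : Type*} [NormedAddCommGroup E] [NormedSpace ℝ E] [FiniteDimensional ℝ E]
  [MeasurableSpace E] [BorelSpace E] {μ : Measure E} [μ.IsAddHaarMeasure]

lemma setLIntegral_ball_inv_dist_sq_le (hE : finrank ℝ E = 3) (x : E) (ρ : ℝ) :
    ∫⁻ y in ball x ρ, ENNReal.ofReal (1 / ‖x - y‖ ^ 2) ∂μ
      ≤ ENNReal.ofReal (8 * ρ) * μ (ball 0 1) := by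
  rcases le_or_gt ρ 0 with hρ | hρ
  · simp [ball_eq_empty.2 hρ]
  set r : ℕ → ℝ := fun k => ρ / 2 ^ k
  set A : ℕ → Set E := fun k => closedBall x (r k) \ closedBall x (r (k + 1))
  have hcover : ball x ρ ⊆ {x} ∪ ⋃ k, A k := by
    intro y hy
    rcases eq_or_ne y x with rfl | hyx
    · exact Or.inl rfl
    have hd := dist_pos.2 hyx
    obtain ⟨k, hk, hk'⟩ :=
      exists_nat_pow_near ((one_le_div hd).2 (mem_ball.1 hy).le) one_lt_two
    rw [le_div_iff₀ hd] at hk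
    rw [div_lt_iff₀ hd] at hk'
    refine Or.inr (mem_iUnion.2 ⟨k, mem_closedBall.2 ((le_div_iff₀' (by positivity)).2 hk),
      fun h => ?_⟩)
    have := (le_div_iff₀' (by positivity)).1 (mem_closedBall.1 h)
    linarith
  have hshell : ∀ k, ∫⁻ y in A k, ENNReal.ofReal (1 / ‖x - y‖ ^ 2) ∂μ
      ≤ ENNReal.ofReal (8 * ρ / 2 / 2 ^ k) * μ (ball 0 1) := by
    intro k
    have hr : ∀ k, 0 < r k := fun k => by positivity
    calc ∫⁻ y in A k, ENNReal.ofReal (1 / ‖x - y‖ ^ 2) ∂μ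
        ≤ ∫⁻ _ in A k, ENNReal.ofReal (1 / r (k + 1) ^ 2) ∂μ := by
          refine setLIntegral_mono measurable_const fun y hy => ENNReal.ofReal_le_ofReal ?_
          have : r (k + 1) < ‖x - y‖ := by
            simpa [dist_eq_norm, norm_sub_rev] using hy.2
          gcongr
      _ ≤ ENNReal.ofReal (1 / r (k + 1) ^ 2) * μ (closedBall x (r k)) := by
          rw [setLIntegral_const]
          gcongr
          exact sdiff_subset
      _ = ENNReal.ofReal (8 * ρ / 2 / 2 ^ k) * μ (ball 0 1) := by
          rw [Measure.addHaar_closedBall μ x (hr k).le, hE, ← mul_assoc,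
            ← ENNReal.ofReal_mul (by positivity)]
          congr 2
          simp only [r]
          field_simp
          ring
  calc ∫⁻ y in ball x ρ, ENNReal.ofReal (1 / ‖x - y‖ ^ 2) ∂μ
      ≤ ∫⁻ y in {x} ∪ ⋃ k, A k, ENNReal.ofReal (1 / ‖x - y‖ ^ 2) ∂μ :=
        lintegral_mono_set hcover
    _ ≤ ∑' k, ∫⁻ y in A k, ENNReal.ofReal (1 / ‖x - y‖ ^ 2) ∂μ := by
        have : Nontrivial E := Module.nontrivial_of_finrank_pos (R := ℝ) (by omega)
        refine (lintegral_union_le _ _ _).trans ?_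
        rw [setLIntegral_measure_zero _ _ (measure_singleton x), zero_add]
        exact lintegral_iUnion_le _ _
    _ ≤ ∑' k, ENNReal.ofReal (8 * ρ / 2 / 2 ^ k) * μ (ball 0 1) := ENNReal.tsum_le_tsum hshell
    _ = ENNReal.ofReal (8 * ρ) * μ (ball 0 1) := by
        rw [ENNReal.tsum_mul_right, ← ENNReal.ofReal_tsum_of_nonneg (fun k => by positivity)
          (summable_geometric_two' _), tsum_geometric_two']

lemma setLIntegral_inv_dist_sq_le (hE : finrank ℝ E = 3) (x : E) (s : Set E) :
    ∫⁻ y in s, ENNReal.ofReal (1 / ‖x - y‖ ^ 2) ∂μ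
      ≤ (8 * μ (ball 0 1) + 1) * μ s ^ (1 / 3 : ℝ) := by
  rcases eq_or_ne (μ s) 0 with hs0 | hs0
  · simp [setLIntegral_measure_zero _ _ hs0]
  rcases eq_or_ne (μ s) ∞ with hstop | hstop
  · simp [hstop, ENNReal.top_rpow_of_pos, ENNReal.mul_top]
  -- `ρ³ = μ s` balances the part of `s` in `ball x ρ` (at most `8 ρ μ (ball 0 1)`)
  -- against the rest (at most `μ s / ρ²`)
  set m := (μ s).toReal
  have hm : 0 < m := ENNReal.toReal_pos hs0 hstop
  set ρ := m ^ (1 / 3 : ℝ)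
  have hρ : 0 < ρ := by positivity
  have hρ3 : ρ ^ 3 = m := by
    rw [← Real.rpow_natCast, ← Real.rpow_mul hm.le]
    norm_num
  have hρs : ENNReal.ofReal ρ = μ s ^ (1 / 3 : ℝ) := by
    rw [← ENNReal.ofReal_rpow_of_nonneg ENNReal.toReal_nonneg (by norm_num),
      ENNReal.ofReal_toReal hstop]
  have hfar :
      ∫⁻ y in s \ ball x ρ, ENNReal.ofReal (1 / ‖x - y‖ ^ 2) ∂μ ≤ ENNReal.ofReal ρ := by
    calc ∫⁻ y in s \ ball x ρ, ENNReal.ofReal (1 / ‖x - y‖ ^ 2) ∂μ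
        ≤ ∫⁻ _ in s \ ball x ρ, ENNReal.ofReal (1 / ρ ^ 2) ∂μ := by
          refine setLIntegral_mono measurable_const fun y hy => ENNReal.ofReal_le_ofReal ?_
          have : ρ ≤ ‖x - y‖ := by
            simpa [dist_eq_norm, norm_sub_rev] using hy.2
          gcongr
      _ ≤ ENNReal.ofReal (1 / ρ ^ 2) * μ s := by
          rw [setLIntegral_const]
          gcongr
          exact sdiff_subset
      _ = ENNReal.ofReal ρ := by
          rw [← ENNReal.ofReal_toReal hstop, ← ENNReal.ofReal_mul (by positivity)]
          change ENNReal.ofReal (1 / ρ ^ 2 * m) = _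
          rw [← hρ3]
          congr 1
          field_simp
  calc ∫⁻ y in s, ENNReal.ofReal (1 / ‖x - y‖ ^ 2) ∂μ
      ≤ (∫⁻ y in s ∩ ball x ρ, ENNReal.ofReal (1 / ‖x - y‖ ^ 2) ∂μ)
        + ∫⁻ y in s \ ball x ρ, ENNReal.ofReal (1 / ‖x - y‖ ^ 2) ∂μ := by
        conv_lhs => rw [← inter_union_sdiff s (ball x ρ)]
        exact lintegral_union_le _ _ _
    _ ≤ ENNReal.ofReal (8 * ρ) * μ (ball 0 1) + ENNReal.ofReal ρ :=
        add_le_add ((lintegral_mono_set inter_subset_right).trans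
          (setLIntegral_ball_inv_dist_sq_le hE x ρ)) hfar
    _ = (8 * μ (ball 0 1) + 1) * μ s ^ (1 / 3 : ℝ) := by
        rw [ENNReal.ofReal_mul (by norm_num), ← hρs]
        norm_num
        ring

lemma lintegral_sq_mul_inv_dist_sq_le (hE : finrank ℝ E = 3) {F : E → ℝ}
    (hF : ∀ y, 0 ≤ F y) (x : E) :
    ∫⁻ y, ENNReal.ofReal (F y ^ 2 * (1 / ‖x - y‖ ^ 2)) ∂μ
      ≤ 16 * (8 * μ (ball 0 1) + 1) *
        ∫⁻ t in Ioi 0, ENNReal.ofReal t * μ {y | t ≤ F y} ^ (1 / 3 : ℝ) := by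
  set q : E → ℝ≥0∞ := fun y => ENNReal.ofReal (1 / ‖x - y‖ ^ 2)
  have hq : Measurable q := by fun_prop
  -- measurable hulls of the level sets, since `F` need not be measurable
  set S : ℤ → Set E := fun n => toMeasurable μ {y | (2 : ℝ) ^ (n + 1) ≤ F y}
  set c : ℤ → ℝ≥0∞ := fun n => ENNReal.ofReal (16 * ((2 : ℝ) ^ n) ^ 2)
  calc ∫⁻ y, ENNReal.ofReal (F y ^ 2 * (1 / ‖x - y‖ ^ 2)) ∂μ
      ≤ ∫⁻ y, ∑' n, (S n).indicator (fun _ => c n) y * q y ∂μ := by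
        refine lintegral_mono fun y => ?_
        rw [ENNReal.ofReal_mul (sq_nonneg _), ENNReal.tsum_mul_right]
        gcongr
        exact ofReal_sq_le_tsum_indicator hF S (fun n => subset_toMeasurable _ _) y
    _ = ∑' n, ∫⁻ y, (S n).indicator (fun _ => c n) y * q y ∂μ :=
        lintegral_tsum fun n =>
          ((measurable_const.indicator (measurableSet_toMeasurable _ _)).mul hq).aemeasurable
    _ = ∑' n, c n * ∫⁻ y in S n, q y ∂μ := by
        congr 1 with n
        rw [← lintegral_const_mul _ hq, ← lintegral_indicator (measurableSet_toMeasurable _ _)]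
        exact lintegral_congr fun y => (indicator_mul_left _ _ _).symm
    _ ≤ ∑' n, c n *
          ((8 * μ (ball 0 1) + 1) * μ {y | (2 : ℝ) ^ (n + 1) ≤ F y} ^ (1 / 3 : ℝ)) := by
        gcongr with n
        exact (setLIntegral_inv_dist_sq_le hE x (S n)).trans_eq (by rw [measure_toMeasurable])
    _ = 16 * (8 * μ (ball 0 1) + 1) * ∑' n : ℤ,
          ENNReal.ofReal (((2 : ℝ) ^ n) ^ 2) * μ {y | (2 : ℝ) ^ (n + 1) ≤ F y} ^ (1 / 3 : ℝ) := by
        rw [← ENNReal.tsum_mul_left]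
        congr 1 with n
        simp only [c]
        rw [ENNReal.ofReal_mul (by norm_num), ENNReal.ofReal_ofNat]
        ring
    _ ≤ _ := by
        gcongr
        exact tsum_zpow_sq_mul_distribution_le μ F (by norm_num)

lemma exists_lintegral_sq_mul_inv_dist_sq_le (hE : finrank ℝ E = 3) {W G : E → ℝ} {K R : ℝ}
    (hG : ∀ y, 0 ≤ G y) (hW : ∀ y, |W y| ≤ (closedBall 0 R).indicator (fun _ => K) y + G y)
    (hGdist : ∫⁻ t in Ioi 0, ENNReal.ofReal t * μ {y | t ≤ G y} ^ (1 / 3 : ℝ) < ∞) :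
    ∃ C < ∞, ∀ x, ∫⁻ y, ENNReal.ofReal (W y ^ 2 * (1 / ‖x - y‖ ^ 2)) ∂μ ≤ C := by
  set c := 8 * μ (ball 0 1) + 1
  set I := ∫⁻ t in Ioi 0, ENNReal.ofReal t * μ {y | t ≤ G y} ^ (1 / 3 : ℝ)
  have hc : c < ∞ := by
    have : μ (ball 0 1) < ∞ := measure_ball_lt_top
    finiteness
  have hB : μ (closedBall (0 : E) R) < ∞ := measure_closedBall_lt_top
  refine ⟨2 * (ENNReal.ofReal (K ^ 2) * (c * μ (closedBall 0 R) ^ (1 / 3 : ℝ)))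
    + 2 * (16 * c * I), by finiteness, fun x => ?_⟩
  set q : E → ℝ := fun y => 1 / ‖x - y‖ ^ 2
  set a : E → ℝ := (closedBall 0 R).indicator fun _ => K
  have hpt : ∀ y, ENNReal.ofReal (W y ^ 2 * q y) ≤
      2 * (closedBall 0 R).indicator (fun y => ENNReal.ofReal (K ^ 2 * q y)) y
        + 2 * ENNReal.ofReal (G y ^ 2 * q y) := by
    intro y
    have hq : 0 ≤ q y := by positivity
    have hsq : W y ^ 2 ≤ 2 * a y ^ 2 + 2 * G y ^ 2 := by
      have := pow_le_pow_left₀ (abs_nonneg _) (hW y) 2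
      rw [sq_abs] at this
      nlinarith [sq_nonneg (a y - G y)]
    have hind : ENNReal.ofReal (a y ^ 2 * q y)
        = (closedBall 0 R).indicator (fun y => ENNReal.ofReal (K ^ 2 * q y)) y := by
      by_cases hy : y ∈ closedBall 0 R <;> simp [a, hy]
    calc ENNReal.ofReal (W y ^ 2 * q y)
        ≤ ENNReal.ofReal (2 * (a y ^ 2 * q y) + 2 * (G y ^ 2 * q y)) :=
          ENNReal.ofReal_le_ofReal (by nlinarith)
      _ = _ := by
          rw [ENNReal.ofReal_add (by positivity) (by positivity), ENNReal.ofReal_mul zero_le_two,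
            ENNReal.ofReal_mul zero_le_two, hind, ENNReal.ofReal_ofNat]
  calc ∫⁻ y, ENNReal.ofReal (W y ^ 2 * q y) ∂μ
      ≤ ∫⁻ y, (2 * (closedBall 0 R).indicator (fun y => ENNReal.ofReal (K ^ 2 * q y)) y
        + 2 * ENNReal.ofReal (G y ^ 2 * q y)) ∂μ := lintegral_mono hpt
    _ = 2 * (ENNReal.ofReal (K ^ 2) * ∫⁻ y in closedBall 0 R, ENNReal.ofReal (q y) ∂μ)
        + 2 * ∫⁻ y, ENNReal.ofReal (G y ^ 2 * q y) ∂μ := by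
        have hind : Measurable fun y =>
            (closedBall 0 R).indicator (fun y => ENNReal.ofReal (K ^ 2 * q y)) y :=
          (Measurable.indicator (by fun_prop) measurableSet_closedBall)
        rw [lintegral_add_left (hind.const_mul 2), lintegral_const_mul' _ _ (by simp),
          lintegral_const_mul' _ _ (by simp), lintegral_indicator measurableSet_closedBall]
        simp_rw [ENNReal.ofReal_mul (sq_nonneg K)]
        rw [lintegral_const_mul' _ _ (by simp)]
    _ ≤ _ := by
        gcongr
        · exact setLIntegral_inv_dist_sq_le hE x _
        · exact lintegral_sq_mul_inv_dist_sq_le hE hG x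

open Nat in
lemma integrable_exp_neg_mul_norm {c : ℝ} (hc : 0 < c) :
    Integrable (fun x : E => Real.exp (-(c * ‖x‖))) μ := by
  set n := finrank ℝ E + 1
  refine ((integrable_one_add_norm (μ := μ) (r := n) (by simp [n])).const_mul
    (Real.exp c * n ! / c ^ n)).mono' (by fun_prop) (ae_of_all _ fun x => ?_)
  have hexp := Real.pow_div_factorial_le_exp (x := c * (1 + ‖x‖)) (by positivity) n
  rw [Real.norm_of_nonneg (Real.exp_nonneg _), Real.rpow_neg (by positivity), Real.rpow_natCast,
    show -(c * ‖x‖) = c - c * (1 + ‖x‖) by ring, Real.exp_sub]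
  calc Real.exp c / Real.exp (c * (1 + ‖x‖))
        ≤ Real.exp c / ((c * (1 + ‖x‖)) ^ n / n !) := by gcongr
    _ = _ := by
        rw [mul_pow]
        field_simp

lemma memLp_exp_neg_mul_norm {c : ℝ} (hc : 0 < c) (p : ℝ≥0∞) :
    MemLp (fun x : E => Real.exp (-(c * ‖x‖))) p μ := by
  have hmeas : AEStronglyMeasurable (fun x : E => Real.exp (-(c * ‖x‖))) μ := by fun_prop
  rcases eq_or_ne p 0 with rfl | hp0
  · exact memLp_zero_iff_aestronglyMeasurable.2 hmeas
  rcases eq_or_ne p ∞ with rfl | hptop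
  · refine memLp_top_of_bound hmeas 1 (ae_of_all _ fun x => ?_)
    rw [Real.norm_of_nonneg (Real.exp_nonneg _), Real.exp_le_one_iff, neg_nonpos]
    positivity
  refine (integrable_norm_rpow_iff hmeas hp0 hptop).1 ?_
  refine (integrable_exp_neg_mul_norm (mul_pos hc (ENNReal.toReal_pos hp0 hptop))).congr
    (ae_of_all _ fun x => ?_)
  simp only [Real.norm_of_nonneg (Real.exp_nonneg _), ← Real.exp_mul]
  ring_nf

end FiniteDimensional

local notation "ℝ³" => EuclideanSpace ℝ (Fin 3)

lemma negKernel_nonneg (lamj : ℝ) (x y : ℝ³) : 0 ≤ negKernel lamj x y := by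
  unfold negKernel
  positivity

lemma negKernel_le {lamj ε : ℝ} (hε : 0 ≤ ε) (hεlt : ε ≤ √(-lamj)) (x y : ℝ³) :
    negKernel lamj x y
      ≤ Real.exp (-(ε * ‖x‖)) * (Real.exp (ε * ‖y‖) / (4 * π * ‖x - y‖)) := by
  have hexp : -√(-lamj) * ‖x - y‖ ≤ -(ε * ‖x‖) + ε * ‖y‖ := by
    have := norm_sub_norm_le x y
    nlinarith [norm_nonneg (x - y)]
  rw [negKernel, ← mul_div_assoc, ← Real.exp_add]
  exact div_le_div_of_nonneg_right (Real.exp_le_exp.2 hexp) (by positivity)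

lemma enorm_le_of_eq_neg_integral_negKernel {lamj ε : ℝ} (hε : 0 ≤ ε)
    (hεlt : ε ≤ √(-lamj)) {V : ℝ³ → ℝ} {ψ : ℝ³ → ℂ} (hψ : AEStronglyMeasurable ψ volume) {x : ℝ³}
    (hx : ψ x = -∫ y, (negKernel lamj x y : ℂ) * ((V y : ℂ) * ψ y)) :
    ‖ψ x‖ₑ ≤ ENNReal.ofReal (Real.exp (-(ε * ‖x‖)) / (8 * π)) *
      ((∫⁻ y, ENNReal.ofReal ((Real.exp (ε * ‖y‖) * V y) ^ 2 * (1 / ‖x - y‖ ^ 2)))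
        + ∫⁻ y, ENNReal.ofReal (‖ψ y‖ ^ 2)) := by
  have hpt : ∀ y, ‖(negKernel lamj x y : ℂ) * ((V y : ℂ) * ψ y)‖ ≤
      Real.exp (-(ε * ‖x‖)) / (8 * π) *
        ((Real.exp (ε * ‖y‖) * V y) ^ 2 * (1 / ‖x - y‖ ^ 2) + ‖ψ y‖ ^ 2) := by
    intro y
    set u := Real.exp (ε * ‖y‖) * |V y|
    set r := ‖x - y‖
    -- `2 a b ≤ a² + b²` with `a = u / r`; this also covers `r = 0`, where `u / r = 0`
    have hamgm : u * ‖ψ y‖ / (4 * π * r) ≤ ((u / r) ^ 2 + ‖ψ y‖ ^ 2) / (8 * π) := by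
      calc u * ‖ψ y‖ / (4 * π * r) = 2 * (u / r) * ‖ψ y‖ / (8 * π) := by ring
        _ ≤ _ := div_le_div_of_nonneg_right (two_mul_le_add_sq _ _) (by positivity)
    rw [norm_mul, norm_mul, Complex.norm_real, Complex.norm_real, Real.norm_of_nonneg
      (negKernel_nonneg _ _ _), Real.norm_eq_abs]
    calc negKernel lamj x y * (|V y| * ‖ψ y‖)
        ≤ Real.exp (-(ε * ‖x‖)) * (Real.exp (ε * ‖y‖) / (4 * π * r))
            * (|V y| * ‖ψ y‖) := by
          gcongr
          exact negKernel_le hε hεlt x y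
      _ = Real.exp (-(ε * ‖x‖)) * (u * ‖ψ y‖ / (4 * π * r)) := by ring
      _ ≤ Real.exp (-(ε * ‖x‖)) * (((u / r) ^ 2 + ‖ψ y‖ ^ 2) / (8 * π)) := by gcongr
      _ = _ := by
          simp only [u, div_pow, mul_pow, sq_abs]
          ring
  have hψ2 : AEMeasurable (fun y => ENNReal.ofReal (‖ψ y‖ ^ 2)) volume := by fun_prop
  calc ‖ψ x‖ₑ ≤ ∫⁻ y, ‖(negKernel lamj x y : ℂ) * ((V y : ℂ) * ψ y)‖ₑ := by
        rw [hx, enorm_neg]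
        exact enorm_integral_le_lintegral_enorm _
    _ ≤ ∫⁻ y, ENNReal.ofReal (Real.exp (-(ε * ‖x‖)) / (8 * π)) *
          (ENNReal.ofReal ((Real.exp (ε * ‖y‖) * V y) ^ 2 * (1 / ‖x - y‖ ^ 2))
            + ENNReal.ofReal (‖ψ y‖ ^ 2)) := by
        refine lintegral_mono fun y => ?_
        rw [← ofReal_norm, ← ENNReal.ofReal_add (by positivity) (by positivity),
          ← ENNReal.ofReal_mul (by positivity)]
        exact ENNReal.ofReal_le_ofReal (hpt y)
    _ = _ := by
        rw [lintegral_const_mul' _ _ ENNReal.ofReal_ne_top, lintegral_add_right' _ hψ2]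

lemma exists_norm_le_mul_exp_neg_of_eq_neg_integral_negKernel {lamj ε : ℝ} (hε : 0 ≤ ε)
    (hεlt : ε ≤ √(-lamj)) {V : ℝ³ → ℝ} {ψ : ℝ³ → ℂ} (hψ : MemLp ψ 2 volume)
    (hV : ∃ C < ∞, ∀ x,
      ∫⁻ y, ENNReal.ofReal ((Real.exp (ε * ‖y‖) * V y) ^ 2 * (1 / ‖x - y‖ ^ 2)) ≤ C)
    (heq : ∀ x, ψ x = -∫ y, (negKernel lamj x y : ℂ) * ((V y : ℂ) * ψ y)) :
    ∃ M, ∀ x, ‖ψ x‖ ≤ M * Real.exp (-(ε * ‖x‖)) := by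
  obtain ⟨C, hC, hCx⟩ := hV
  set P := ∫⁻ y, ENNReal.ofReal (‖ψ y‖ ^ 2)
  have hP : P < ∞ := (hψ.integrable_norm_pow two_ne_zero).lintegral_lt_top
  refine ⟨(C + P).toReal / (8 * π), fun x => ?_⟩
  have hx : ‖ψ x‖ₑ ≤ ENNReal.ofReal (Real.exp (-(ε * ‖x‖)) / (8 * π)) * (C + P) :=
    (enorm_le_of_eq_neg_integral_negKernel hε hεlt hψ.1 (heq x)).trans (by gcongr; exact hCx x)
  rw [← ofReal_norm, ← ENNReal.ofReal_toReal (a := C + P) (by finiteness),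
    ← ENNReal.ofReal_mul (by positivity), ENNReal.ofReal_le_ofReal_iff (by positivity)] at hx
  exact hx.trans_eq (by ring)

theorem eigenfunction_exponential_decay_general (V₁ V₂ : EuclideanSpace ℝ (Fin 3) → ℝ)
    (ψ : EuclideanSpace ℝ (Fin 3) → ℂ) (lamj : ℝ)
    (hψ : MemLp ψ 2 volume)
    (hV₁b : ∃ M, ∀ x, |V₁ x| ≤ M) (hV₁s : HasCompactSupport V₁)
    (ε : ℝ) (hε : 0 < ε) (hεlt : ε < Real.sqrt (-lamj))
    (hV₂L : lorentzNorm 6 2 volume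
      (fun x => ((Real.exp (ε * ‖x‖) * V₂ x : ℝ) : ℂ)) < ∞)
    (heq : ∀ x, ψ x = -∫ y, ((negKernel lamj x y : ℝ) : ℂ) * (((V₁ y + V₂ y : ℝ) : ℂ) * ψ y)) :
    (∃ M : ℝ, ∀ x, ‖ψ x‖ ≤ M * Real.exp (-(ε * ‖x‖))) ∧
      ∀ p : ℝ≥0∞, 1 ≤ p → MemLp ψ p volume := by
  set f : ℝ³ → ℂ := fun x => ((Real.exp (ε * ‖x‖) * V₂ x : ℝ) : ℂ)
  obtain ⟨K, R, hK⟩ := hV₁s.exists_abs_mul_le_indicator hV₁b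
    (w := fun y => Real.exp (ε * ‖y‖)) (by fun_prop)
  have hW : ∀ y, |Real.exp (ε * ‖y‖) * (V₁ + V₂) y|
      ≤ (closedBall 0 R).indicator (fun _ => K) y + ‖f y‖ := fun y => by
    rw [Pi.add_apply, mul_add]
    refine (abs_add_le _ _).trans (add_le_add (hK y) (le_of_eq ?_))
    simp only [f, Complex.norm_real, Real.norm_eq_abs]
  have hf :
      ∫⁻ t in Ioi 0, ENNReal.ofReal t * volume {y | t ≤ ‖f y‖} ^ (1 / 3 : ℝ) < ∞ := by
    rw [lorentzNorm_two_eq] at hV₂L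
    norm_num at hV₂L
    exact (ENNReal.rpow_lt_top_iff_of_pos (by norm_num)).1
      (ENNReal.lt_top_of_mul_ne_top_right hV₂L.ne (by positivity))
  obtain ⟨M, hM⟩ := exists_norm_le_mul_exp_neg_of_eq_neg_integral_negKernel hε.le hεlt.le hψ
    (exists_lintegral_sq_mul_inv_dist_sq_le finrank_euclideanSpace_fin
      (fun _ => norm_nonneg _) hW hf) heq
  refine ⟨⟨M, hM⟩, fun p _ => (memLp_exp_neg_mul_norm hε p).of_le_mul (c := M) hψ.1 ?_⟩
  exact ae_of_all _ fun x => (hM x).trans_eq (by rw [Real.norm_of_nonneg (Real.exp_nonneg _)])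

/-- Exponential decay of eigenfunctions: if `λⱼ < 0`,
`ψⱼ = -R₀(λⱼ)(Vψⱼ)` with `V = V₁ + V₂`, `V₁` bounded and compactly supported,
`‖V₂‖_𝒦 ≤ 1`, `e^{ε|·|}V₂ ∈ L^{6,2}` for some `0 < ε < √(-λⱼ)`, and the operator
`e^{ε|·|}R₀(λⱼ)V₂ e^{-ε|·|}` has `L^∞ → L^∞` norm less than `1`, then `e^{ε|x|}ψⱼ ∈ L^∞`;
in particular `ψⱼ ∈ L^p` for all `1 ≤ p ≤ ∞`. -/
theorem eigenfunction_exponential_decay (V₁ V₂ : EuclideanSpace ℝ (Fin 3) → ℝ)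
    (ψ : EuclideanSpace ℝ (Fin 3) → ℂ) (lamj : ℝ) (hlam : lamj < 0)
    (hψ : MemLp ψ 2 volume)
    (hV₁b : ∃ M, ∀ x, |V₁ x| ≤ M) (hV₁s : HasCompactSupport V₁)
    (hV₂K : ∀ x : EuclideanSpace ℝ (Fin 3),
      ∫⁻ y, (‖V₂ y‖₊ : ℝ≥0∞) / ENNReal.ofReal ‖x - y‖ ≤ 1)
    (ε : ℝ) (hε : 0 < ε) (hεlt : ε < Real.sqrt (-lamj))
    (hV₂L : lorentzNorm 6 2 volume
      (fun x => ((Real.exp (ε * ‖x‖) * V₂ x : ℝ) : ℂ)) < ∞)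
    (heq : ∀ x, ψ x = -∫ y, ((negKernel lamj x y : ℝ) : ℂ) * (((V₁ y + V₂ y : ℝ) : ℂ) * ψ y))
    (θ : ℝ) (hθ : θ < 1)
    (hop : ∀ g : EuclideanSpace ℝ (Fin 3) → ℂ, (∀ y, ‖g y‖ ≤ 1) →
      ∀ x, Real.exp (ε * ‖x‖) *
          ‖∫ y, ((negKernel lamj x y : ℝ) : ℂ) *
            ((V₂ y : ℂ) * (((Real.exp (-(ε * ‖y‖)) : ℝ) : ℂ) * g y))‖ ≤ θ) :
    (∃ M : ℝ, ∀ x, ‖ψ x‖ ≤ M * Real.exp (-(ε * ‖x‖))) ∧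
      ∀ p : ℝ≥0∞, 1 ≤ p → MemLp ψ p volume :=
  eigenfunction_exponential_decay_general V₁ V₂ ψ lamj hψ hV₁b hV₁s ε hε hεlt hV₂L heq
end
end
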